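/- arXiv:1510.02082 — 4 statements merged into one kernel-verified Lean document; each statement's English description precedes it below -/
import Mathlib

section
/- Let A and B be Hermitian operators on a finite-dimensional complex Hilbert space satisfying AB + BA = 0 and A² = B² = I, and let ψ be a unit vector. Define ΔA² = ⟨ψ|A²|ψ⟩ − ⟨ψ|A|ψ⟩² and similarly ΔB². Then ΔA² + ΔB² ≥ 1. -/
open Matrix

/-- Anticommuting Hermitian involutions: the sum of variances is at least 1. -/
theorem uncertainty_sum_of_variances {n : ℕ} (A B : Matrix (Fin n) (Fin n) ℂ)
    (hA : A.IsHermitian) (hB : B.IsHermitian)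
    (hAB : A * B + B * A = 0) (hA2 : A * A = 1) (hB2 : B * B = 1)
    (ψ : Fin n → ℂ) (hψ : star ψ ⬝ᵥ ψ = 1) :
    1 ≤ ((star ψ ⬝ᵥ (A * A).mulVec ψ).re - (star ψ ⬝ᵥ A.mulVec ψ).re ^ 2)
      + ((star ψ ⬝ᵥ (B * B).mulVec ψ).re - (star ψ ⬝ᵥ B.mulVec ψ).re ^ 2) := by
  set a := (star ψ ⬝ᵥ A.mulVec ψ).re with ha
  set b := (star ψ ⬝ᵥ B.mulVec ψ).re with hb
  -- the expectation values are real
  have hreal : ∀ (M : Matrix (Fin n) (Fin n) ℂ), M.IsHermitian →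
      star ψ ⬝ᵥ M.mulVec ψ = ((star ψ ⬝ᵥ M.mulVec ψ).re : ℂ) := by
    intro M hM
    have h : (starRingEnd ℂ) (star ψ ⬝ᵥ M.mulVec ψ) = star ψ ⬝ᵥ M.mulVec ψ := by
      calc (starRingEnd ℂ) (star ψ ⬝ᵥ M.mulVec ψ)
          = star (star ψ ⬝ᵥ M.mulVec ψ) := rfl
        _ = star (M.mulVec ψ) ⬝ᵥ star (star ψ) := (star_dotProduct_star _ _).symm
        _ = (star ψ ᵥ* Mᴴ) ⬝ᵥ ψ := by rw [star_mulVec, star_star]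
        _ = star ψ ⬝ᵥ Mᴴ.mulVec ψ := (dotProduct_mulVec _ _ _).symm
        _ = star ψ ⬝ᵥ M.mulVec ψ := by rw [hM.eq]
    exact (Complex.conj_eq_iff_re.mp h).symm
  have hAr : star ψ ⬝ᵥ A.mulVec ψ = (a : ℂ) := hreal A hA
  have hBr : star ψ ⬝ᵥ B.mulVec ψ = (b : ℂ) := hreal B hB
  -- the combined operator
  set C : Matrix (Fin n) (Fin n) ℂ := (a : ℂ) • A + (b : ℂ) • B with hC
  have hBA : B * A = -(A * B) := by
    have := hAB
    linear_combination (norm := noncomm_ring) hAB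
  have hC2 : C * C = ((a ^ 2 + b ^ 2 : ℝ) : ℂ) • (1 : Matrix (Fin n) (Fin n) ℂ) := by
    simp only [hC, add_mul, mul_add, smul_mul_assoc, mul_smul_comm, smul_smul, hA2, hB2, hBA,
      smul_neg]
    push_cast
    module
  have hCH : Cᴴ = C := by
    simp [hC, conjTranspose_add, conjTranspose_smul, hA.eq, hB.eq, Complex.star_def,
      Complex.conj_ofReal]
  set s : ℝ := a ^ 2 + b ^ 2 with hs
  have h1 : star ψ ⬝ᵥ C.mulVec ψ = (s : ℂ) := by
    simp only [hC, add_mulVec, smul_mulVec, dotProduct_add, dotProduct_smul, hAr, hBr,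
      smul_eq_mul, hs]
    push_cast
    ring
  have h2 : star (C.mulVec ψ) ⬝ᵥ C.mulVec ψ = (s : ℂ) := by
    rw [star_mulVec, ← dotProduct_mulVec, mulVec_mulVec, hCH, hC2, smul_mulVec,
      dotProduct_smul]
    simp [one_mulVec, hψ]
  -- Cauchy-Schwarz in EuclideanSpace
  have hcs : s * s ≤ 1 * s := by
    let x : EuclideanSpace ℂ (Fin n) := WithLp.toLp 2 ψ
    let y : EuclideanSpace ℂ (Fin n) := WithLp.toLp 2 (C.mulVec ψ)
    have hix : (inner ℂ x x : ℂ) = 1 := by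
      simpa [inner, dotProduct, mul_comm] using hψ
    have hiy : (inner ℂ y y : ℂ) = (s : ℂ) := by
      simpa [inner, dotProduct, mul_comm] using h2
    have hixy : (inner ℂ x y : ℂ) = (s : ℂ) := by
      simpa [inner, dotProduct, mul_comm, x, y] using h1
    have := inner_mul_inner_self_le (𝕜 := ℂ) x y
    have hyx : ‖(inner ℂ y x : ℂ)‖ = ‖(inner ℂ x y : ℂ)‖ := by
      rw [← inner_conj_symm x y, RCLike.norm_conj]
    rw [hyx, hix, hiy, hixy] at this
    have hs0 : 0 ≤ s := by positivity
    simpa [Complex.norm_real, abs_of_nonneg hs0] using this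
  have hs0 : 0 ≤ s := by positivity
  have hsle : s ≤ 1 := by nlinarith
  rw [hA2, hB2, one_mulVec, hψ]
  simp only [Complex.one_re]
  simp only [hs] at hsle
  linarith
end

section
/- Let H be an m × n matrix over F₂. Define the block matrices Hₓ = (H ⊗ Iₙ | Iₘ ⊗ Hᵀ) and H_z = (Iₙ ⊗ H | Hᵀ ⊗ Iₘ), both with n² + m² columns. Then Hₓ · H_zᵀ = 0 over F₂. -/
open Matrix Kronecker

/-- The hypergraph-product check matrices Hₓ = (H ⊗ₖ Iₙ | Iₘ ⊗ₖ Hᵀ) and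
H_z = (Iₙ ⊗ₖ H | Hᵀ ⊗ₖ Iₘ) satisfy Hₓ · H_zᵀ = 0 over F₂. -/
theorem hypergraph_product_css_orthogonality {m n : ℕ}
    (H : Matrix (Fin m) (Fin n) (ZMod 2)) :
    (Matrix.of fun (r : Fin m × Fin n) (c : (Fin n × Fin n) ⊕ (Fin m × Fin m)) =>
        Sum.elim (fun c' => (H ⊗ₖ (1 : Matrix (Fin n) (Fin n) (ZMod 2))) r c')
          (fun c' => ((1 : Matrix (Fin m) (Fin m) (ZMod 2)) ⊗ₖ Hᵀ) r c') c) *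
      (Matrix.of fun (r : Fin n × Fin m) (c : (Fin n × Fin n) ⊕ (Fin m × Fin m)) =>
        Sum.elim (fun c' => ((1 : Matrix (Fin n) (Fin n) (ZMod 2)) ⊗ₖ H) r c')
          (fun c' => (Hᵀ ⊗ₖ (1 : Matrix (Fin m) (Fin m) (ZMod 2))) r c') c)ᵀ = 0 := by
  ext ⟨i, j⟩ ⟨k, l⟩
  simp only [Matrix.mul_apply, Matrix.transpose_apply, Matrix.of_apply,
    Fintype.sum_sum_type, Sum.elim_inl, Sum.elim_inr,
    Matrix.kroneckerMap_apply, Matrix.one_apply, Matrix.zero_apply,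
    Fintype.sum_prod_type]
  simp [Finset.sum_ite_eq, Finset.sum_ite_eq', mul_ite, ite_mul, mul_comm]
  exact CharTwo.add_self_eq_zero _
end

section
/- Let G be a d-regular graph on n vertices whose adjacency matrix has second-largest eigenvalue λ₂. Then the edge-boundary Cheeger constant h(G) = min over nonempty S with |S| ≤ n/2 of |∂(S)|/|S| satisfies h(G) ≥ (d − λ₂)/2. -/
open Matrix

set_option maxHeartbeats 800000 in
/-- Cheeger-type inequality: for a d-regular graph whose adjacency matrix has
second-largest eigenvalue λ₂ (expressed by the variational bound on vectors
orthogonal to the constant vector), every set S with |S| ≤ n/2 has edge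
boundary of size at least ((d − λ₂)/2)·|S|.  Here the edge boundary is counted
as the set of ordered pairs (u,v) with u ∈ S adjacent to v ∉ S, which is in
bijection with the set of boundary edges. -/
theorem cheeger_inequality_regular {V : Type*} [Fintype V] [DecidableEq V]
    (G : SimpleGraph V) [DecidableRel G.Adj] (d : ℕ)
    (hreg : G.IsRegularOfDegree d) (lam2 : ℝ)
    (hlam : ∀ x : V → ℝ, (∑ v, x v) = 0 →
      x ⬝ᵥ (G.adjMatrix ℝ).mulVec x ≤ lam2 * (x ⬝ᵥ x))
    (S : Finset V) (hS : S.Nonempty) (hS2 : 2 * S.card ≤ Fintype.card V) :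
    ((d : ℝ) - lam2) / 2 * S.card ≤
      ((Finset.univ.filter
        (fun p : V × V => G.Adj p.1 p.2 ∧ p.1 ∈ S ∧ p.2 ∉ S)).card : ℝ) := by
  classical
  by_cases hd : (d : ℝ) ≤ lam2
  · have h1 : ((d : ℝ) - lam2) / 2 * S.card ≤ 0 :=
      mul_nonpos_of_nonpos_of_nonneg (by linarith) (Nat.cast_nonneg _)
    exact h1.trans (Nat.cast_nonneg _)
  push_neg at hd
  set n : ℝ := (Fintype.card V : ℝ) with hn
  set s : ℝ := (S.card : ℝ) with hs
  set B : ℝ := ((Finset.univ.filter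
      (fun p : V × V => G.Adj p.1 p.2 ∧ p.1 ∈ S ∧ p.2 ∉ S)).card : ℝ) with hB
  have hs0 : 0 < s := by
    have := Finset.card_pos.mpr hS
    positivity
  have h2s : 2 * s ≤ n := by rw [hn, hs]; exact_mod_cast hS2
  have hn0 : 0 < n := by linarith
  set x : V → ℝ := fun v => if v ∈ S then n - s else -s with hxdef
  have hNcard : ∀ u, (G.neighborFinset u).card = d := fun u => by
    rw [G.card_neighborFinset_eq_degree]; exact hreg u
  set m : V → ℕ := fun u => ((G.neighborFinset u).filter (· ∈ S)).card with hm
  -- sums of the indicator over any finset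
  have hxform : ∀ w, x w = n * (if w ∈ S then (1:ℝ) else 0) - s := by
    intro w; by_cases h : w ∈ S <;> simp [hxdef, h]
  have hsum_ind : ∀ t : Finset V, (∑ w ∈ t, if w ∈ S then (1:ℝ) else 0)
      = ((t.filter (· ∈ S)).card : ℝ) := by
    intro t; rw [Finset.sum_boole]
  -- x sums to zero
  have hcardSc : ((Finset.univ.filter (fun v => v ∉ S)).card : ℝ) = n - s := by
    have h1 := Finset.card_filter_add_card_filter_not
      (s := (Finset.univ : Finset V)) (p := fun v => v ∈ S)
    have h2 : (Finset.univ.filter (fun v => v ∈ S)).card = S.card := by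
      simp
    have h3 : ((Finset.univ.filter (fun v => v ∈ S)).card : ℝ)
        + ((Finset.univ.filter (fun v => v ∉ S)).card : ℝ) = n := by
      rw [hn]; exact_mod_cast h1
    rw [h2] at h3; linarith
  have hx0 : (∑ v, x v) = 0 := by
    have h1 : ∀ v : V, x v = if v ∈ S then n - s else -s := fun v => rfl
    rw [Finset.sum_congr rfl fun v _ => h1 v, Finset.sum_ite, Finset.sum_const,
      Finset.sum_const]
    have h2 : ((Finset.univ.filter (fun v => v ∈ S)).card : ℝ) = s := by
      rw [hs]; norm_cast; simp
    simp only [nsmul_eq_mul]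
    rw [h2, hcardSc]; ring
  -- x ⬝ x
  have hxx : x ⬝ᵥ x = s * (n - s) * n := by
    have h1 : ∀ v, x v * x v = if v ∈ S then (n-s)*(n-s) else s*s := by
      intro v; by_cases h : v ∈ S <;> simp [hxdef, h]
    rw [dotProduct, Finset.sum_congr rfl fun v _ => h1 v, Finset.sum_ite,
      Finset.sum_const, Finset.sum_const]
    have h2 : ((Finset.univ.filter (fun v => v ∈ S)).card : ℝ) = s := by
      rw [hs]; norm_cast; simp
    simp only [nsmul_eq_mul]
    rw [h2, hcardSc]; ring
  -- row sums against x
  have F1 : ∀ u, (∑ w ∈ G.neighborFinset u, x w) = n * m u - s * d := by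
    intro u
    rw [Finset.sum_congr rfl fun w _ => hxform w, Finset.sum_sub_distrib,
      ← Finset.mul_sum, hsum_ind, Finset.sum_const, hNcard u]
    simp [hm, mul_comm]
  -- total column count: ∑ u, m u = d * S.card
  have F3 : (∑ u : V, m u) = d * S.card := by
    have h1 : ∀ u, m u = ∑ v ∈ S, if G.Adj u v then 1 else 0 := by
      intro u
      rw [hm]
      simp only
      rw [Finset.filter_mem_eq_inter, Finset.inter_comm, ← Finset.filter_mem_eq_inter]
      rw [Finset.card_eq_sum_ones, Finset.sum_filter]
      refine Finset.sum_congr rfl fun v _ => ?_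
      simp [SimpleGraph.mem_neighborFinset]
    rw [Finset.sum_congr rfl fun u _ => h1 u, Finset.sum_comm]
    have h2 : ∀ v ∈ S, (∑ u : V, if G.Adj u v then 1 else 0) = d := by
      intro v _
      have : (∑ u : V, if G.Adj u v then 1 else 0)
          = (Finset.univ.filter (fun u => G.Adj u v)).card := by
        rw [Finset.card_eq_sum_ones, Finset.sum_filter]
      rw [this]
      have : Finset.univ.filter (fun u => G.Adj u v) = G.neighborFinset v := by
        ext u; simp [SimpleGraph.mem_neighborFinset, G.adj_comm]
      rw [this, hNcard]
    rw [Finset.sum_congr rfl h2, Finset.sum_const, smul_eq_mul, mul_comm]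
  -- boundary count: B + ∑_{u∈S} m u = d * S.card  (in ℕ)
  have F2 : (Finset.univ.filter
      (fun p : V × V => G.Adj p.1 p.2 ∧ p.1 ∈ S ∧ p.2 ∉ S)).card
      + ∑ u ∈ S, m u = d * S.card := by
    have h1 : (Finset.univ.filter
        (fun p : V × V => G.Adj p.1 p.2 ∧ p.1 ∈ S ∧ p.2 ∉ S)).card
        = ∑ u ∈ S, ((G.neighborFinset u).filter (· ∉ S)).card := by
      rw [Finset.card_eq_sum_ones, Finset.sum_filter, Fintype.sum_prod_type]
      have h2 : ∀ u : V, (∑ v : V, if G.Adj u v ∧ u ∈ S ∧ v ∉ S then 1 else 0)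
          = if u ∈ S then ((G.neighborFinset u).filter (· ∉ S)).card else 0 := by
        intro u
        by_cases hu : u ∈ S
        · have he : Finset.univ.filter (fun v => G.Adj u v ∧ u ∈ S ∧ v ∉ S)
              = (G.neighborFinset u).filter (· ∉ S) := by
            ext v; simp [SimpleGraph.mem_neighborFinset, hu]
          rw [if_pos hu, ← he, Finset.card_eq_sum_ones, Finset.sum_filter]
        · simp [hu]
      rw [Finset.sum_congr rfl fun u _ => h2 u, Finset.sum_ite_mem,
        Finset.univ_inter]
    rw [h1, ← Finset.sum_add_distrib]
    have h3 : ∀ u ∈ S, ((G.neighborFinset u).filter (· ∉ S)).card + m u = d := by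
      intro u _
      rw [hm]
      simp only
      rw [add_comm, Finset.card_filter_add_card_filter_not, hNcard]
    rw [Finset.sum_congr rfl h3, Finset.sum_const, smul_eq_mul, mul_comm]
  -- the quadratic form
  set E1 : ℝ := (∑ u ∈ S, (m u : ℝ)) with hE1
  have hBE1 : B + E1 = d * s := by
    have hc := congrArg (Nat.cast (R := ℝ)) F2
    push_cast at hc
    rw [hB, hE1, hs]
    exact_mod_cast hc
  have hmtot : (∑ u : V, (m u : ℝ)) = d * s := by
    rw [hs]; exact_mod_cast F3
  have key : x ⬝ᵥ (G.adjMatrix ℝ).mulVec x = n^2 * E1 - n * (d:ℝ) * s^2 := by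
    have h1 : ∀ u, ((G.adjMatrix ℝ).mulVec x) u = n * (m u : ℝ) - s * d := by
      intro u; rw [G.adjMatrix_mulVec_apply]; exact F1 u
    rw [dotProduct]
    rw [Finset.sum_congr rfl fun u _ => by rw [h1 u, hxform u]]
    have expand : ∀ u : V, (n * (if u ∈ S then (1:ℝ) else 0) - s) * (n * (m u:ℝ) - s * d)
        = n^2 * (if u ∈ S then (m u : ℝ) else 0)
          - (n*s*(d:ℝ)) * (if u ∈ S then (1:ℝ) else 0)
          - (s*n) * (m u : ℝ) + s^2*(d:ℝ) := by
      intro u; by_cases h : u ∈ S <;> simp [h] <;> ring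
    rw [Finset.sum_congr rfl fun u _ => expand u]
    rw [Finset.sum_add_distrib, Finset.sum_sub_distrib, Finset.sum_sub_distrib,
      ← Finset.mul_sum, ← Finset.mul_sum, ← Finset.mul_sum, Finset.sum_const,
      Finset.sum_ite_mem, Finset.univ_inter, hsum_ind, hmtot]
    have h2 : ((Finset.univ.filter (· ∈ S)).card : ℝ) = s := by
      rw [hs]; norm_cast; simp
    rw [h2, ← hE1]
    simp only [nsmul_eq_mul, Finset.card_univ, ← hn]
    ring
  -- apply the eigenvalue bound
  have hbound := hlam x hx0
  rw [key, hxx] at hbound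
  have hE1B : E1 = (d:ℝ) * s - B := by linarith
  rw [hE1B] at hbound
  -- hbound : n^2 * (d*s - B) - n*d*s^2 ≤ lam2 * (s*(n-s)*n)
  have h3 : ((d:ℝ) - lam2) * s * (n - s) ≤ n * B := by
    have hfac : n * (((d:ℝ) - lam2) * s * (n - s) - n * B) ≤ 0 := by nlinarith [hbound]
    by_contra hcon
    push_neg at hcon
    nlinarith [mul_pos hn0 (by linarith : (0:ℝ) < ((d:ℝ) - lam2) * s * (n - s) - n * B)]
  by_contra hcon
  push_neg at hcon
  have h5 := mul_lt_mul_of_pos_left hcon hn0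
  have hpos : 0 < ((d:ℝ) - lam2) * s := mul_pos (sub_pos.mpr hd) hs0
  have h4 : ((d:ℝ) - lam2) * s * (n / 2) ≤ ((d:ℝ) - lam2) * s * (n - s) :=
    mul_le_mul_of_nonneg_left (by linarith) hpos.le
  nlinarith [h3, h4, h5]
end

section
/- Let L ≥ 2 be an integer, m ≥ 1, and define f(x) = (1 + 1/L − 2x)/(1 − 1/L) and C_m(x) = 1 − T_m(f(x))/T_m(f(0)), where T_m is the Chebyshev polynomial. Then C_m(0) = 0; for all x ∈ [1/L, 1], C_m(x) ≥ 1 − 1/(1 + 2m²/L); and for all x ∈ [0,1], 0 ≤ C_m(x) ≤ 2. -/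
open Polynomial Polynomial.Chebyshev

/-- Packaged induction: for `1 ≤ y ≤ z`, the Chebyshev polynomials satisfy
`1 ≤ T_n(y)`, monotonicity `T_n(y) ≤ T_n(z)`, a lower bound on successive
differences, monotonicity of differences, and `1 + n² (y-1) ≤ T_n(y)`. -/
lemma cheb_pack (y z : ℝ) (hy : 1 ≤ y) (hyz : y ≤ z) : ∀ n : ℕ,
    1 ≤ (T ℝ n).eval y ∧ (T ℝ n).eval y ≤ (T ℝ n).eval z ∧
    (2 * (n : ℝ) + 1) * (y - 1) ≤ (T ℝ (n + 1)).eval y - (T ℝ n).eval y ∧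
    (T ℝ (n + 1)).eval y - (T ℝ n).eval y ≤ (T ℝ (n + 1)).eval z - (T ℝ n).eval z ∧
    1 + (n : ℝ) ^ 2 * (y - 1) ≤ (T ℝ n).eval y := by
  have hy0 : 0 ≤ y - 1 := by linarith
  have hz1 : 1 ≤ z := le_trans hy hyz
  intro n
  induction n with
  | zero => simp [T_zero, T_one]; linarith
  | succ n ih =>
    obtain ⟨h1, h2, h3, h4, h5⟩ := ih
    have hny : (1 : ℝ) ≤ (T ℝ (n + 1)).eval y := by
      have : (0:ℝ) ≤ (2 * (n : ℝ) + 1) * (y - 1) := by positivity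
      linarith
    have hmono : (T ℝ (n + 1)).eval y ≤ (T ℝ (n + 1)).eval z := by linarith
    have hnz : (1 : ℝ) ≤ (T ℝ (n + 1)).eval z := le_trans hny hmono
    have hrecy : (T ℝ (n + 1 + 1)).eval y = 2 * y * (T ℝ (n + 1)).eval y - (T ℝ n).eval y := by
      have := T_add_two ℝ (n : ℤ)
      have h2 : ((n : ℤ) + 2 : ℤ) = ((n : ℕ) + 1 + 1 : ℤ) := by ring
      rw [h2] at this
      rw [this]; simp
    have hrecz : (T ℝ (n + 1 + 1)).eval z = 2 * z * (T ℝ (n + 1)).eval z - (T ℝ n).eval z := by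
      have := T_add_two ℝ (n : ℤ)
      have h2 : ((n : ℤ) + 2 : ℤ) = ((n : ℕ) + 1 + 1 : ℤ) := by ring
      rw [h2] at this
      rw [this]; simp
    have key : (2 * (y - 1)) * (T ℝ (n + 1)).eval y ≤ (2 * (z - 1)) * (T ℝ (n + 1)).eval z := by
      apply mul_le_mul (by linarith) hmono (by linarith) (by linarith)
    push_cast
    refine ⟨hny, hmono, ?_, ?_, ?_⟩
    · have hb : (2:ℝ) * (y - 1) * 1 ≤ 2 * (y - 1) * (T ℝ (n + 1)).eval y :=
        mul_le_mul_of_nonneg_left hny (by linarith)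
      rw [hrecy]; nlinarith
    · rw [hrecy, hrecz]; nlinarith
    · have : (0:ℝ) ≤ (2 * (n : ℝ) + 1) * (y - 1) := by positivity
      nlinarith

/-- Properties of the rescaled Chebyshev polynomial
C_m(x) = 1 − T_m(f(x))/T_m(f(0)) with f(x) = (1 + 1/L − 2x)/(1 − 1/L):
C_m(0) = 0; C_m(x) ≥ 1 − 1/(1 + 2m²/L) on [1/L, 1]; and 0 ≤ C_m(x) ≤ 2
on [0, 1]. -/
theorem rescaled_chebyshev_properties (L m : ℕ) (hL : 2 ≤ L) (hm : 1 ≤ m) :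
    let f : ℝ → ℝ := fun x => (1 + 1 / (L : ℝ) - 2 * x) / (1 - 1 / (L : ℝ))
    let Cm : ℝ → ℝ := fun x =>
      1 - (Polynomial.Chebyshev.T ℝ m).eval (f x) /
            (Polynomial.Chebyshev.T ℝ m).eval (f 0)
    Cm 0 = 0 ∧
    (∀ x : ℝ, 1 / (L : ℝ) ≤ x → x ≤ 1 →
      1 - 1 / (1 + 2 * (m : ℝ) ^ 2 / L) ≤ Cm x) ∧
    (∀ x : ℝ, 0 ≤ x → x ≤ 1 → 0 ≤ Cm x ∧ Cm x ≤ 2) := by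
  intro f Cm
  have hL2 : (2 : ℝ) ≤ (L : ℝ) := by exact_mod_cast hL
  have hLpos : (0 : ℝ) < (L : ℝ) := by linarith
  have hd : (0 : ℝ) < 1 - 1 / (L : ℝ) := by
    rw [sub_pos, div_lt_one hLpos]; linarith
  have hm1 : (1 : ℝ) ≤ (m : ℝ) := by exact_mod_cast hm
  -- f 0 ≥ 1 + 2/L
  have hf0 : f 0 = (1 + 1 / (L : ℝ)) / (1 - 1 / (L : ℝ)) := by simp [f]
  have hf0ge : 1 + 2 / (L : ℝ) ≤ f 0 := by
    rw [hf0, le_div_iff₀ hd]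
    have h2 : (1 + 2/(L:ℝ)) * (1 - 1/(L:ℝ)) = 1 + 1/(L:ℝ) - 2*(1/(L:ℝ))^2 := by ring
    have h : (0:ℝ) ≤ (1/(L:ℝ))^2 := by positivity
    linarith
  have hf0gt1 : (1 : ℝ) < f 0 := by
    have : (0:ℝ) < 2 / (L:ℝ) := by positivity
    linarith
  -- bounds at f 0
  obtain ⟨hT1, -, -, -, hT5⟩ := cheb_pack (f 0) (f 0) (le_of_lt hf0gt1) le_rfl m
  have hTlb : 1 + 2 * (m : ℝ) ^ 2 / L ≤ (T ℝ m).eval (f 0) := by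
    have h1 : (m : ℝ)^2 * (2 / (L:ℝ)) ≤ (m:ℝ)^2 * (f 0 - 1) := by
      apply mul_le_mul_of_nonneg_left (by linarith) (by positivity)
    calc 1 + 2 * (m : ℝ) ^ 2 / L = 1 + (m:ℝ)^2 * (2 / (L:ℝ)) := by ring
    _ ≤ 1 + (m:ℝ)^2 * (f 0 - 1) := by linarith
    _ ≤ _ := hT5
  have hTpos : (0 : ℝ) < (T ℝ m).eval (f 0) := by linarith
  have hTge1 : (1 : ℝ) ≤ (T ℝ m).eval (f 0) := hT1
  -- abs bound on [-1,1]
  have habs : ∀ u : ℝ, -1 ≤ u → u ≤ 1 → -1 ≤ (T ℝ m).eval u ∧ (T ℝ m).eval u ≤ 1 := by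
    intro u h1 h2
    have hu : Real.cos (Real.arccos u) = u := Real.cos_arccos h1 h2
    rw [← hu, T_real_cos]
    exact ⟨Real.neg_one_le_cos _, Real.cos_le_one _⟩
  -- f values
  have hfval : ∀ x : ℝ, f x = (1 + 1 / (L : ℝ) - 2 * x) / (1 - 1 / (L : ℝ)) := fun x => rfl
  refine ⟨?_, ?_, ?_⟩
  · show (1 : ℝ) - _ / _ = 0
    rw [div_self (ne_of_gt hTpos)]; ring
  · intro x hx1 hx2
    have hfle1 : f x ≤ 1 := by
      rw [hfval, div_le_one hd]; linarith
    have hfgem1 : -1 ≤ f x := by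
      rw [hfval, le_div_iff₀ hd]; linarith
    obtain ⟨-, hub⟩ := habs (f x) hfgem1 hfle1
    have h1 : (T ℝ m).eval (f x) / (T ℝ m).eval (f 0) ≤ 1 / (1 + 2 * (m : ℝ) ^ 2 / L) := by
      apply div_le_div₀ (by norm_num) hub (by positivity) hTlb
    show 1 - 1 / (1 + 2 * (m : ℝ) ^ 2 / L) ≤ 1 - _ / _
    linarith
  · intro x hx0 hx1
    rcases le_or_gt x (1 / (L : ℝ)) with hc | hc
    · -- f x ∈ [1, f 0]
      have hfge1 : 1 ≤ f x := by
        rw [hfval, le_div_iff₀ hd]; linarith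
      have hfle : f x ≤ f 0 := by
        rw [hfval, hf0, div_le_div_iff₀ hd hd]; nlinarith
      obtain ⟨hg1, hg2, -, -, -⟩ := cheb_pack (f x) (f 0) hfge1 hfle m
      constructor
      · show (0:ℝ) ≤ 1 - _ / _
        have : (T ℝ m).eval (f x) / (T ℝ m).eval (f 0) ≤ 1 := by
          rw [div_le_one hTpos]; exact hg2
        linarith
      · show (1:ℝ) - _ / _ ≤ 2
        have : (0:ℝ) ≤ (T ℝ m).eval (f x) / (T ℝ m).eval (f 0) := by positivity
        linarith
    · have hfle1 : f x ≤ 1 := by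
        rw [hfval, div_le_one hd]; linarith
      have hfgem1 : -1 ≤ f x := by
        rw [hfval, le_div_iff₀ hd]; linarith
      obtain ⟨hlb, hub⟩ := habs (f x) hfgem1 hfle1
      have h1 : (T ℝ m).eval (f x) / (T ℝ m).eval (f 0) ≤ 1 := by
        rw [div_le_one hTpos]; linarith
      have h2 : -1 ≤ (T ℝ m).eval (f x) / (T ℝ m).eval (f 0) := by
        rw [le_div_iff₀ hTpos]; nlinarith
      exact ⟨by show (0:ℝ) ≤ 1 - _ / _; linarith, by show (1:ℝ) - _ / _ ≤ 2; linarith⟩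
end
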